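/- If 𝒮 = (S_1, …, S_n) is a compatible sequence of structurally submodular separation systems inside a universe of separations U, and 𝒫 is a robust set of profiles in 𝒮, then there is a nested set N of separations in U which efficiently distinguishes all the distinguishable profiles in 𝒫. -/

import Mathlib

/-!
Uncrossing, level by level. The level of a pair of profiles is the least `i` such that `S i`
distinguishes them. Let `N` be nested and efficiently distinguish all pairs of level `< i`, and
let `(P, Q)` be a pair of level `i` that it does not. Choose `s ∈ S i` distinguishing `P` and `Q`
that crosses as few separations of `N` as possible. Every `t ∈ N` crossing `s` has an
orientation `τ` lying in both `P` and `Q`, and minimality of `s` forces `τ ⊔ s, τ ⊔ s* ∉ S i`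
(such a corner would distinguish `P` and `Q` and cross fewer separations of `N`). So
compatibility puts `τ* ⊔ s` and `τ* ⊔ s*` into every `S j ∋ t` with `j ≤ i`, and robustness
shows that one of them efficiently distinguishes every pair of level `≤ i` that `t` did.
Replacing the separations of `N` crossing `s` by `s` and these corners keeps `N` nested, loses
no pair of level `≤ i`, and gains `(P, Q)`.
-/

variable {U : Type*}

/-- `star` is an order-reversing involution: `s** = s` and `r ≤ s ↔ s* ≤ r*`. -/
def OrderReversingInvolution [Lattice U] (star : U → U) : Prop :=
  (∀ s : U, star (star s) = s) ∧ ∀ r s : U, r ≤ s ↔ star s ≤ star r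

/-- Two separations are nested if they have comparable orientations. -/
def Nested [Lattice U] (star : U → U) (r s : U) : Prop :=
  r ≤ s ∨ r ≤ star s ∨ star r ≤ s ∨ star r ≤ star s

/-- A `*`-closed set `S` is structurally submodular if for all `r, s ∈ S` at
least one of `r ⊔ s` and `r ⊓ s` lies in `S`. -/
def StructSubmodular [Lattice U] (S : Set U) : Prop :=
  ∀ r ∈ S, ∀ s ∈ S, r ⊔ s ∈ S ∨ r ⊓ s ∈ S

/-- `O` is an orientation of `S`: it contains, for each `s ∈ S`, exactly one
of `s` and `star s`. -/
def Orients [Lattice U] (star : U → U) (S O : Set U) : Prop :=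
  O ⊆ S ∧ ∀ s ∈ S, (s ∈ O ∨ star s ∈ O) ∧ (s ∈ O → star s ∈ O → s = star s)

/-- `O` is consistent: there are no `r, s ∈ O` with `star r < s`. -/
def Consistent [Lattice U] (star : U → U) (O : Set U) : Prop :=
  ∀ r ∈ O, ∀ s ∈ O, ¬ star r < s

/-- A profile of `S` is a consistent orientation `P` of `S` such that for all
`r, s ∈ P` we have `star r ⊓ star s ∉ P`. -/
def IsProfile [Lattice U] (star : U → U) (S P : Set U) : Prop :=
  Orients star S P ∧ Consistent star P ∧
    ∀ r ∈ P, ∀ s ∈ P, star r ⊓ star s ∉ P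

/-- `s` distinguishes `P` and `P'`: one orientation of `s` lies in `P` and the
other in `P'`. -/
def Distinguishes [Lattice U] (star : U → U) (s : U) (P P' : Set U) : Prop :=
  (s ∈ P ∧ star s ∈ P') ∨ (star s ∈ P ∧ s ∈ P')

/-- The four corner separations of `a` and `b`, as a function on `Fin 4`. -/
def corners [Lattice U] (star : U → U) (a b : U) : Fin 4 → U :=
  ![a ⊔ b, a ⊔ star b, star a ⊔ b, star a ⊔ star b]

/-- A nested (ascending) sequence of `*`-closed structurally submodular
separation systems is compatible if for all `i ≤ j`, `a ∈ S i` and `b ∈ S j`,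
either `S i` contains at least two corner separations of `a` and `b`, or
`S j` contains at least three of them. -/
def Compatible [Lattice U] (star : U → U) {n : ℕ} (S : Fin (n + 1) → Set U) : Prop :=
  ∀ i j : Fin (n + 1), i ≤ j → ∀ a ∈ S i, ∀ b ∈ S j,
    (∃ k₁ k₂ : Fin 4, k₁ ≠ k₂ ∧
      corners star a b k₁ ∈ S i ∧ corners star a b k₂ ∈ S i) ∨
    (∃ k₁ k₂ k₃ : Fin 4, k₁ ≠ k₂ ∧ k₁ ≠ k₃ ∧ k₂ ≠ k₃ ∧
      corners star a b k₁ ∈ S j ∧ corners star a b k₂ ∈ S j ∧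
      corners star a b k₃ ∈ S j)

/-- `s` distinguishes `P` and `P'` efficiently in the sequence `S`: `s` lies
in the top system, distinguishes `P` and `P'`, and lies in every `S i` that
contains some separation distinguishing `P` and `P'`. -/
def EffDistSeq [Lattice U] (star : U → U) {n : ℕ} (S : Fin (n + 1) → Set U)
    (s : U) (P P' : Set U) : Prop :=
  s ∈ S (Fin.last n) ∧ Distinguishes star s P P' ∧
    ∀ i : Fin (n + 1), (∃ t ∈ S i, Distinguishes star t P P') → s ∈ S i

/-- A set `Ps` of profiles in the sequence `S` is robust if for all
`P, Q, Q' ∈ Ps`, every `r` with `r ∈ Q ∩ Q'` and `star r ∈ P`, and every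
`s ∈ S j` distinguishing `Q` and `Q'` efficiently, there is an orientation
`s'` of `s` with `star r ⊔ s' ∈ P` or `r ⊔ s' ∈ S j`. -/
def RobustSeq [Lattice U] (star : U → U) {n : ℕ} (S : Fin (n + 1) → Set U)
    (Ps : Set (Set U)) : Prop :=
  ∀ P ∈ Ps, ∀ Q ∈ Ps, ∀ Q' ∈ Ps, ∀ r : U, r ∈ Q → r ∈ Q' → star r ∈ P →
    ∀ j : Fin (n + 1), ∀ s ∈ S j, EffDistSeq star S s Q Q' →
      ∃ s', (s' = s ∨ s' = star s) ∧ (star r ⊔ s' ∈ P ∨ r ⊔ s' ∈ S j)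

def IsOrientation (star : U → U) (σ s : U) : Prop :=
  σ = s ∨ σ = star s

def IsNestedSet [Lattice U] (star : U → U) (N : Set U) : Prop :=
  ∀ a ∈ N, ∀ b ∈ N, Nested star a b

def DistinguishedBy [Lattice U] (star : U → U) (T P Q : Set U) : Prop :=
  ∃ t ∈ T, Distinguishes star t P Q

def EffDistinguishedBy [Lattice U] (star : U → U) {n : ℕ} (S : Fin (n + 1) → Set U)
    (N P Q : Set U) : Prop :=
  ∃ t ∈ N, EffDistSeq star S t P Q

def crossing [Lattice U] (star : U → U) (N : Set U) (s : U) : Set U :=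
  {u ∈ N | ¬ Nested star s u}

structure IsCompatibleSeq [Lattice U] (star : U → U) {n : ℕ} (S : Fin (n + 1) → Set U) :
    Prop where
  involution : OrderReversingInvolution star
  mono : Monotone S
  star_mem : ∀ i, ∀ s ∈ S i, star s ∈ S i
  compatible : Compatible star S

section

variable [Lattice U] {star : U → U}

namespace OrderReversingInvolution

theorem star_star (h : OrderReversingInvolution star) (s : U) : star (star s) = s :=
  h.1 s

theorem le_star_comm (h : OrderReversingInvolution star) {r s : U} :
    r ≤ star s ↔ s ≤ star r := by
  rw [h.2 r (star s), h.star_star]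

theorem star_le_comm (h : OrderReversingInvolution star) {r s : U} :
    star r ≤ s ↔ star s ≤ r := by
  rw [h.2 (star r) s, h.star_star]

theorem star_sup (h : OrderReversingInvolution star) (r s : U) :
    star (r ⊔ s) = star r ⊓ star s :=
  le_antisymm (le_inf ((h.2 _ _).1 le_sup_left) ((h.2 _ _).1 le_sup_right))
    (h.le_star_comm.1 (sup_le (h.le_star_comm.1 inf_le_left) (h.le_star_comm.1 inf_le_right)))

theorem star_sup_le_star_right (h : OrderReversingInvolution star) (r s : U) :
    star (r ⊔ s) ≤ star s :=
  h.star_sup r s ▸ inf_le_right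

theorem isOrientation_comm (h : OrderReversingInvolution star) {σ s : U} :
    IsOrientation star σ s ↔ IsOrientation star s σ := by
  unfold IsOrientation
  constructor <;> rintro (rfl | rfl) <;> simp [h.star_star]

theorem isOrientation_trans (h : OrderReversingInvolution star) {r s t : U}
    (hrs : IsOrientation star r s) (hst : IsOrientation star s t) : IsOrientation star r t := by
  unfold IsOrientation at *
  rcases hrs with rfl | rfl <;> rcases hst with rfl | rfl <;> simp [h.star_star]

theorem nested_comm (h : OrderReversingInvolution star) {a b : U} :
    Nested star a b → Nested star b a := by
  rintro (hab | hab | hab | hab)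
  · exact Or.inr (Or.inr (Or.inr ((h.2 a b).1 hab)))
  · exact Or.inr (Or.inl (h.le_star_comm.1 hab))
  · exact Or.inr (Or.inr (Or.inl (h.star_le_comm.1 hab)))
  · exact Or.inl ((h.2 b a).2 hab)

theorem nested_star_left (h : OrderReversingInvolution star) {a b : U} :
    Nested star (star a) b ↔ Nested star a b := by
  unfold Nested
  rw [h.star_star]
  tauto

theorem nested_star_right (h : OrderReversingInvolution star) {a b : U} :
    Nested star a (star b) ↔ Nested star a b := by
  unfold Nested
  rw [h.star_star]
  tauto

theorem nested_iff_of_isOrientation (h : OrderReversingInvolution star) {σ s τ t : U}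
    (hσ : IsOrientation star σ s) (hτ : IsOrientation star τ t) :
    Nested star σ τ ↔ Nested star s t := by
  rcases hσ with rfl | rfl <;> rcases hτ with rfl | rfl <;>
    simp only [h.nested_star_left, h.nested_star_right]

theorem nested_sup (h : OrderReversingInvolution star) {u σ τ : U}
    (huσ : Nested star u σ) (huτ : Nested star u τ) (hστ : ¬ σ ≤ star τ) :
    Nested star u (τ ⊔ σ) := by
  rcases huσ with h1 | h1 | h1 | h1
  · exact Or.inl (h1.trans le_sup_right)
  · rcases huτ with h2 | h2 | h2 | h2
    · exact Or.inl (h2.trans le_sup_left)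
    · exact Or.inr (Or.inl (h.star_sup τ σ ▸ le_inf h2 h1))
    · exact Or.inr (Or.inr (Or.inl (h2.trans le_sup_left)))
    · exact absurd (h.le_star_comm.1 (((h.2 τ u).2 h2).trans h1)) hστ
  · exact Or.inr (Or.inr (Or.inl (h1.trans le_sup_right)))
  · rcases huτ with h2 | h2 | h2 | h2
    · exact Or.inl (h2.trans le_sup_left)
    · exact absurd (((h.2 σ u).2 h1).trans h2) hστ
    · exact Or.inr (Or.inr (Or.inl (h2.trans le_sup_left)))
    · exact Or.inr (Or.inr (Or.inr (h.star_sup τ σ ▸ le_inf h2 h1)))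

theorem nested_star_sup_star_sup (h : OrderReversingInvolution star) {τ₁ τ₂ σ₁ σ₂ : U}
    (hτ : τ₁ ≤ τ₂ ∨ τ₂ ≤ τ₁ ∨ τ₁ ≤ star τ₂) (hσ : IsOrientation star σ₁ σ₂) :
    Nested star (star τ₁ ⊔ σ₁) (star τ₂ ⊔ σ₂) := by
  rcases hσ with rfl | rfl
  · rcases hτ with hτ | hτ | hτ
    · exact h.nested_comm (Or.inl (sup_le_sup_right ((h.2 τ₁ τ₂).1 hτ) _))
    · exact Or.inl (sup_le_sup_right ((h.2 τ₂ τ₁).1 hτ) _)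
    · refine Or.inr (Or.inr (Or.inl ?_))
      rw [h.star_sup, h.star_star]
      exact (inf_le_left.trans hτ).trans le_sup_left
  · refine Or.inr (Or.inr (Or.inl ?_))
    rw [h.star_sup, h.star_star, h.star_star]
    exact inf_le_right.trans le_sup_right

theorem distinguishes_star (h : OrderReversingInvolution star) {s : U} {P Q : Set U} :
    Distinguishes star (star s) P Q ↔ Distinguishes star s P Q := by
  unfold Distinguishes
  rw [h.star_star]
  tauto

theorem distinguishes_of_isOrientation (h : OrderReversingInvolution star) {σ s : U}
    {P Q : Set U} (hσ : IsOrientation star σ s) (hs : Distinguishes star s P Q) :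
    Distinguishes star σ P Q := by
  rcases hσ with rfl | rfl
  exacts [hs, h.distinguishes_star.2 hs]

end OrderReversingInvolution

theorem Distinguishes.symm {s : U} {P Q : Set U} (h : Distinguishes star s P Q) :
    Distinguishes star s Q P :=
  (Or.symm h).imp And.symm And.symm

theorem distinguishedBy_comm {T P Q : Set U} :
    DistinguishedBy star T P Q ↔ DistinguishedBy star T Q P :=
  ⟨fun ⟨t, ht, hd⟩ => ⟨t, ht, hd.symm⟩, fun ⟨t, ht, hd⟩ => ⟨t, ht, hd.symm⟩⟩

theorem DistinguishedBy.mono {T T' P Q : Set U} (hT : T ⊆ T')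
    (h : DistinguishedBy star T P Q) : DistinguishedBy star T' P Q :=
  let ⟨t, ht, hd⟩ := h
  ⟨t, hT ht, hd⟩

theorem IsNestedSet.mono {N N' : Set U} (hN : IsNestedSet star N) (h : N' ⊆ N) :
    IsNestedSet star N' :=
  fun a ha b hb => hN a (h ha) b (h hb)

theorem IsNestedSet.union {A B : Set U} (hA : IsNestedSet star A) (hB : IsNestedSet star B)
    (hAB : ∀ a ∈ A, ∀ b ∈ B, Nested star a b) (h : OrderReversingInvolution star) :
    IsNestedSet star (A ∪ B) := by
  rintro a (ha | ha) b (hb | hb)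
  exacts [hA a ha b hb, hAB a ha b hb, h.nested_comm (hAB b hb a ha), hB a ha b hb]

theorem IsNestedSet.insert {N : Set U} {s : U} (hN : IsNestedSet star N)
    (hs : ∀ u ∈ N, Nested star s u) (h : OrderReversingInvolution star) :
    IsNestedSet star (insert s N) := by
  rw [Set.insert_eq]
  refine IsNestedSet.union ?_ hN (fun a ha b hb => ha ▸ hs b hb) h
  rintro a rfl b rfl
  exact Or.inl le_rfl

namespace IsProfile

variable {T P Q : Set U}

theorem star_notMem (hP : IsProfile star T P) {r : U} (hr : r ∈ P) : star r ∉ P := by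
  simpa only [inf_idem] using hP.2.2 r hr r hr

theorem mem_of_le (hP : IsProfile star T P) (h : OrderReversingInvolution star) {x z : U}
    (hz : z ∈ T) (hx : x ∈ P) (hzx : z ≤ x) : z ∈ P := by
  refine (hP.1.2 z hz).1.resolve_right fun hz' => ?_
  rcases hzx.eq_or_lt with rfl | hlt
  · exact hP.star_notMem hx hz'
  · exact hP.2.1 (star z) hz' x hx (by rwa [h.star_star])

theorem sup_mem (hP : IsProfile star T P) (h : OrderReversingInvolution star) {r s : U}
    (hr : r ∈ P) (hs : s ∈ P) (hrs : r ⊔ s ∈ T) : r ⊔ s ∈ P :=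
  (hP.1.2 _ hrs).1.resolve_right fun h' => hP.2.2 r hr s hs (h.star_sup r s ▸ h')

theorem le_or_le_or_le_star (hP : IsProfile star T P) (h : OrderReversingInvolution star)
    {τ₁ τ₂ : U} (h₁ : τ₁ ∈ P) (h₂ : τ₂ ∈ P) (hτ : Nested star τ₁ τ₂) :
    τ₁ ≤ τ₂ ∨ τ₂ ≤ τ₁ ∨ τ₁ ≤ star τ₂ := by
  rcases hτ with hτ | hτ | hτ | hτ
  · exact Or.inl hτ
  · exact Or.inr (Or.inr hτ)
  · rcases hτ.eq_or_lt with heq | hlt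
    · exact absurd (heq ▸ h₂) (hP.star_notMem h₁)
    · exact absurd hlt (hP.2.1 τ₁ h₁ τ₂ h₂)
  · exact Or.inr (Or.inl ((h.2 τ₂ τ₁).2 hτ))

theorem exists_isOrientation_mem (hP : IsProfile star T P) {T' : Set U}
    (hQ : IsProfile star T' Q) {t : U} (htT : t ∈ T) (htT' : t ∈ T')
    (ht : ¬ Distinguishes star t P Q) : ∃ τ, IsOrientation star τ t ∧ τ ∈ P ∧ τ ∈ Q := by
  unfold Distinguishes at ht
  rcases (hP.1.2 t htT).1 with htP | htP <;> rcases (hQ.1.2 t htT').1 with htQ | htQ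
  · exact ⟨t, Or.inl rfl, htP, htQ⟩
  · exact absurd (Or.inl ⟨htP, htQ⟩) ht
  · exact absurd (Or.inr ⟨htP, htQ⟩) ht
  · exact ⟨star t, Or.inr rfl, htP, htQ⟩

theorem distinguishes_sup (hP : IsProfile star T P) {T' : Set U} (hQ : IsProfile star T' Q)
    (h : OrderReversingInvolution star) {C : Set U} (hC : ∀ x ∈ C, star x ∈ C) (hCT : C ⊆ T)
    (hCT' : C ⊆ T') {τ σ : U} (hτP : τ ∈ P) (hτQ : τ ∈ Q) (hσ : Distinguishes star σ P Q)
    (hτσ : τ ⊔ σ ∈ C) : Distinguishes star (τ ⊔ σ) P Q := by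
  rcases hσ with ⟨hσP, hσQ⟩ | ⟨hσP, hσQ⟩
  · exact Or.inl ⟨hP.sup_mem h hτP hσP (hCT hτσ),
      hQ.mem_of_le h (hCT' (hC _ hτσ)) hσQ (h.star_sup_le_star_right τ σ)⟩
  · exact Or.inr ⟨hP.mem_of_le h (hCT (hC _ hτσ)) hσP (h.star_sup_le_star_right τ σ),
      hQ.sup_mem h hτQ hσQ (hCT' hτσ)⟩

end IsProfile

section Crossing

variable {N : Set U}

theorem nested_of_notMem_crossing {s u : U} (hu : u ∈ N) (hus : u ∉ crossing star N s) :
    Nested star s u :=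
  not_not.1 fun h => hus ⟨hu, h⟩

theorem crossing_of_isOrientation (h : OrderReversingInvolution star) {σ s : U}
    (hσ : IsOrientation star σ s) : crossing star N σ = crossing star N s := by
  ext u
  simp only [crossing, Set.mem_ofPred_eq, h.nested_iff_of_isOrientation hσ (Or.inl rfl)]

theorem ncard_crossing_sup_lt [Finite U] (h : OrderReversingInvolution star)
    (hN : IsNestedSet star N) {σ t τ : U} (ht : t ∈ crossing star N σ)
    (hτ : IsOrientation star τ t) :
    (crossing star N (τ ⊔ σ)).ncard < (crossing star N σ).ncard := by
  have hστ : ¬ σ ≤ star τ := fun hle =>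
    ht.2 ((h.nested_iff_of_isOrientation (Or.inl rfl) hτ).1 (Or.inr (Or.inl hle)))
  have hsub : crossing star N (τ ⊔ σ) ⊆ crossing star N σ \ {t} := by
    rintro u ⟨huN, hu⟩
    refine ⟨⟨huN, fun huσ => hu (h.nested_comm (h.nested_sup (h.nested_comm huσ) ?_ hστ))⟩, ?_⟩
    · exact (h.nested_iff_of_isOrientation (Or.inl rfl) hτ).2 (hN u huN t ht.1)
    · rintro rfl
      exact hu ((h.nested_iff_of_isOrientation (Or.inl rfl) hτ).1
        (h.nested_comm (Or.inl le_sup_left)))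
  exact (Set.ncard_le_ncard hsub).trans_lt (Set.ncard_sdiff_singleton_lt_of_mem ht)

end Crossing

def crossingCorners (star : U → U) (N P : Set U) (s : U) : Set U :=
  {d | ∃ t ∈ crossing star N s, ∃ τ ∈ P, IsOrientation star τ t ∧
    ∃ σ, IsOrientation star σ s ∧ d = star τ ⊔ σ}

def uncross (star : U → U) (N P : Set U) (s : U) : Set U :=
  N \ crossing star N s ∪ insert s (crossingCorners star N P s)

theorem isNestedSet_uncross (h : OrderReversingInvolution star) {N T P : Set U}
    (hN : IsNestedSet star N) (hP : IsProfile star T P) (s : U) :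
    IsNestedSet star (uncross star N P s) := by
  have hst : ∀ t ∈ crossing star N s, ∀ {σ τ}, IsOrientation star σ s →
      IsOrientation star τ t → ¬ σ ≤ star (star τ) := fun t ht σ τ hσ hτ hle =>
    ht.2 ((h.nested_iff_of_isOrientation hσ hτ).1 (Or.inl (h.star_star τ ▸ hle)))
  have hsd : ∀ d ∈ crossingCorners star N P s, Nested star s d := by
    rintro _ ⟨t, ht, τ, hτP, hτ, σ, hσ, rfl⟩
    exact (h.nested_iff_of_isOrientation hσ (Or.inl rfl)).1 (Or.inl le_sup_right)
  refine (hN.mono Set.sdiff_subset).union (IsNestedSet.insert ?_ hsd h) ?_ h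
  · rintro _ ⟨t₁, ht₁, τ₁, hτ₁P, hτ₁, σ₁, hσ₁, rfl⟩ _ ⟨t₂, ht₂, τ₂, hτ₂P, hτ₂, σ₂, hσ₂, rfl⟩
    have hτ₁₂ := (h.nested_iff_of_isOrientation hτ₁ hτ₂).2 (hN t₁ ht₁.1 t₂ ht₂.1)
    exact h.nested_star_sup_star_sup (hP.le_or_le_or_le_star h hτ₁P hτ₂P hτ₁₂)
      (h.isOrientation_trans hσ₁ (h.isOrientation_comm.1 hσ₂))
  · rintro u ⟨huN, hus⟩ d hd
    rcases hd with rfl | ⟨t, ht, τ, -, hτ, σ, hσ, rfl⟩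
    · exact h.nested_comm (nested_of_notMem_crossing huN hus)
    · refine h.nested_sup ?_ ?_ (hst t ht hσ hτ)
      · exact (h.nested_iff_of_isOrientation (Or.inl rfl) hσ).2
          (h.nested_comm (nested_of_notMem_crossing huN hus))
      · exact h.nested_star_right.2
          ((h.nested_iff_of_isOrientation (Or.inl rfl) hτ).2 (hN u huN t ht.1))

theorem sup_notMem_of_minimal_crossing [Finite U] (h : OrderReversingInvolution star)
    {T T' C N P Q : Set U} (hP : IsProfile star T P) (hQ : IsProfile star T' Q)
    (hC : ∀ x ∈ C, star x ∈ C) (hCT : C ⊆ T) (hCT' : C ⊆ T') (hN : IsNestedSet star N) {s : U}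
    (hsPQ : Distinguishes star s P Q)
    (hmin : ∀ u ∈ C, Distinguishes star u P Q →
      (crossing star N s).ncard ≤ (crossing star N u).ncard)
    {t τ σ : U} (ht : t ∈ crossing star N s) (hτ : IsOrientation star τ t) (hτP : τ ∈ P)
    (hτQ : τ ∈ Q) (hσ : IsOrientation star σ s) : τ ⊔ σ ∉ C := by
  intro hτσ
  have hσPQ := h.distinguishes_of_isOrientation hσ hsPQ
  have hle := hmin _ hτσ (hP.distinguishes_sup hQ h hC hCT hCT' hτP hτQ hσPQ hτσ)
  rw [← crossing_of_isOrientation h hσ] at hle ht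
  exact (ncard_crossing_sup_lt h hN ht hτ).not_ge hle

section Sequence

variable {n : ℕ} {S : Fin (n + 1) → Set U} {Ps : Set (Set U)} {N P Q : Set U}
  {i₀ : Fin (n + 1)} {s : U}

theorem EffDistSeq.symm {t : U} (h : EffDistSeq star S t P Q) : EffDistSeq star S t Q P :=
  ⟨h.1, h.2.1.symm, fun i hi => h.2.2 i (distinguishedBy_comm.1 hi)⟩

theorem effDistSeq_iff_of_isLeast (hmono : Monotone S)
    (hi₀ : IsLeast {i | DistinguishedBy star (S i) P Q} i₀) {t : U} :
    EffDistSeq star S t P Q ↔ Distinguishes star t P Q ∧ t ∈ S i₀ :=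
  ⟨fun ht => ⟨ht.2.1, ht.2.2 i₀ hi₀.1⟩,
    fun ⟨hd, ht⟩ => ⟨hmono (Fin.le_last i₀) ht, hd, fun _ hi => hmono (hi₀.2 hi) ht⟩⟩

theorem exists_isLeast_distinguishedBy {i : Fin (n + 1)}
    (h : DistinguishedBy star (S i) P Q) :
    ∃ j ≤ i, IsLeast {i | DistinguishedBy star (S i) P Q} j :=
  ⟨_, csInf_le' h, isLeast_csInf ⟨i, h⟩⟩

theorem isLeast_distinguishedBy_comm :
    IsLeast {i | DistinguishedBy star (S i) P Q} i₀ ↔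
      IsLeast {i | DistinguishedBy star (S i) Q P} i₀ := by
  simp only [distinguishedBy_comm]

theorem le_of_isLeast_of_isProfile (h : OrderReversingInvolution star)
    (hi₀ : IsLeast {i | DistinguishedBy star (S i) P Q} i₀) {a : Fin (n + 1)}
    (hP : IsProfile star (S a) P) : i₀ ≤ a := by
  obtain ⟨u, -, hu⟩ := hi₀.1
  obtain ⟨v, hv, hvP⟩ : ∃ v, IsOrientation star v u ∧ v ∈ P := by
    rcases hu with ⟨huP, -⟩ | ⟨huP, -⟩
    exacts [⟨u, Or.inl rfl, huP⟩, ⟨star u, Or.inr rfl, huP⟩]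
  exact hi₀.2 ⟨v, hP.1.1 hvP, h.distinguishes_of_isOrientation hv hu⟩

theorem Compatible.star_sup_mem (hcomp : Compatible star S) (hmono : Monotone S)
    (h : OrderReversingInvolution star) {i j : Fin (n + 1)} (hij : i ≤ j) {t τ : U}
    (ht : t ∈ S i) (hs : s ∈ S j) (hτ : IsOrientation star τ t)
    (hgood : ∀ σ, IsOrientation star σ s → τ ⊔ σ ∉ S j) :
    ∀ σ, IsOrientation star σ s → star τ ⊔ σ ∈ S i := by
  have hc : ∀ x y : Fin 4, x ≠ y → corners star t s x ∉ S j → corners star t s y ∉ S j →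
      ∀ k, k ≠ x → k ≠ y → corners star t s k ∈ S i := by
    intro x y hxy hx hy k hkx hky
    have hne : ∀ k', corners star t s k' ∈ S j → k' ≠ x ∧ k' ≠ y := fun k' hk' =>
      ⟨fun e => hx (e ▸ hk'), fun e => hy (e ▸ hk')⟩
    by_contra hk
    rcases hcomp i j hij t ht s hs with ⟨k₁, k₂, h₁₂, m₁, m₂⟩ |
      ⟨k₁, k₂, k₃, h₁₂, h₁₃, h₂₃, m₁, m₂, m₃⟩
    · have h₁ := hne k₁ (hmono hij m₁)
      have h₂ := hne k₂ (hmono hij m₂)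
      have hk₁ : k₁ ≠ k := fun e => hk (e ▸ m₁)
      have hk₂ : k₂ ≠ k := fun e => hk (e ▸ m₂)
      omega
    · have h₁ := hne k₁ m₁
      have h₂ := hne k₂ m₂
      have h₃ := hne k₃ m₃
      omega
  -- corners `0, 1` of `t` and `s` are the `t ⊔ σ`, corners `2, 3` the `t* ⊔ σ`
  rintro σ (rfl | rfl) <;> rcases hτ with rfl | rfl
  · exact hc 0 1 (by decide) (hgood _ (Or.inl rfl)) (hgood _ (Or.inr rfl)) 2 (by decide)
      (by decide)
  · rw [h.star_star]
    exact hc 2 3 (by decide) (hgood _ (Or.inl rfl)) (hgood _ (Or.inr rfl)) 0 (by decide)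
      (by decide)
  · exact hc 0 1 (by decide) (hgood _ (Or.inl rfl)) (hgood _ (Or.inr rfl)) 3 (by decide)
      (by decide)
  · rw [h.star_star]
    exact hc 2 3 (by decide) (hgood _ (Or.inl rfl)) (hgood _ (Or.inr rfl)) 1 (by decide)
      (by decide)

theorem exists_isOrientation_effDistSeq_star_sup (hS : IsCompatibleSeq star S)
    (hprof : ∀ P ∈ Ps, ∃ i, IsProfile star (S i) P) (hrobust : RobustSeq star S Ps)
    (hP : P ∈ Ps) (hQ : Q ∈ Ps) (hs : s ∈ S i₀) (hsPQ : EffDistSeq star S s P Q) {τ : U}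
    (hτP : τ ∈ P) (hτQ : τ ∈ Q) (hgood : ∀ σ, IsOrientation star σ s → τ ⊔ σ ∉ S i₀)
    {R R' : Set U} {j : Fin (n + 1)} (hR : R ∈ Ps) (hR' : R' ∈ Ps)
    (hj : IsLeast {i | DistinguishedBy star (S i) R R'} j) (hτR : star τ ∈ R) (hτR' : τ ∈ R')
    (hcorner : ∀ σ, IsOrientation star σ s → star τ ⊔ σ ∈ S j) :
    ∃ σ, IsOrientation star σ s ∧ EffDistSeq star S (star τ ⊔ σ) R R' := by
  have h := hS.involution
  obtain ⟨σ, hσ, hd | hd⟩ := hrobust R hR P hP Q hQ τ hτP hτQ hτR i₀ s hs hsPQ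
  swap
  · exact absurd hd (hgood σ hσ)
  obtain ⟨c, hR'c⟩ := hprof R' hR'
  have hjc := le_of_isLeast_of_isProfile h (isLeast_distinguishedBy_comm.1 hj) hR'c
  have hd' : star (star τ ⊔ σ) ∈ R' := by
    refine hR'c.mem_of_le h (hS.mono hjc (hS.star_mem j _ (hcorner σ hσ))) hτR' ?_
    rw [h.star_sup, h.star_star]
    exact inf_le_left
  exact ⟨σ, hσ, (effDistSeq_iff_of_isLeast hS.mono hj).2 ⟨Or.inl ⟨hd, hd'⟩, hcorner σ hσ⟩⟩

theorem exists_mem_crossingCorners_effDistSeq [Finite U] (hS : IsCompatibleSeq star S)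
    (hprof : ∀ P ∈ Ps, ∃ i, IsProfile star (S i) P) (hrobust : RobustSeq star S Ps)
    (hN : IsNestedSet star N) (hP : P ∈ Ps) (hQ : Q ∈ Ps)
    (hi₀ : IsLeast {i | DistinguishedBy star (S i) P Q} i₀)
    (hNPQ : ¬ EffDistinguishedBy star S N P Q) (hs : s ∈ S i₀) (hsPQ : Distinguishes star s P Q)
    (hmin : ∀ u ∈ S i₀, Distinguishes star u P Q →
      (crossing star N s).ncard ≤ (crossing star N u).ncard)
    {P' Q' : Set U} {j : Fin (n + 1)} (hP' : P' ∈ Ps) (hQ' : Q' ∈ Ps)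
    (hj : IsLeast {i | DistinguishedBy star (S i) P' Q'} j) (hji₀ : j ≤ i₀) {t : U}
    (ht : t ∈ crossing star N s) (htPQ' : EffDistSeq star S t P' Q') :
    ∃ d ∈ crossingCorners star N P s, EffDistSeq star S d P' Q' := by
  have h := hS.involution
  obtain ⟨htPQ'd, htj⟩ := (effDistSeq_iff_of_isLeast hS.mono hj).1 htPQ'
  have hti₀ : t ∈ S i₀ := hS.mono hji₀ htj
  obtain ⟨a, hPa⟩ := hprof P hP
  obtain ⟨b, hQb⟩ := hprof Q hQ
  have hi₀a : S i₀ ⊆ S a := hS.mono (le_of_isLeast_of_isProfile h hi₀ hPa)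
  have hi₀b : S i₀ ⊆ S b :=
    hS.mono (le_of_isLeast_of_isProfile h (isLeast_distinguishedBy_comm.1 hi₀) hQb)
  have hseff := (effDistSeq_iff_of_isLeast hS.mono hi₀).2 ⟨hsPQ, hs⟩
  have htPQ : ¬ Distinguishes star t P Q := fun htPQ =>
    hNPQ ⟨t, ht.1, (effDistSeq_iff_of_isLeast hS.mono hi₀).2 ⟨htPQ, hti₀⟩⟩
  obtain ⟨τ, hτ, hτP, hτQ⟩ := hPa.exists_isOrientation_mem hQb (hi₀a hti₀) (hi₀b hti₀) htPQ
  have hgood : ∀ σ, IsOrientation star σ s → τ ⊔ σ ∉ S i₀ := fun σ hσ =>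
    sup_notMem_of_minimal_crossing h hPa hQb (hS.star_mem i₀) hi₀a hi₀b hN hsPQ hmin ht hτ
      hτP hτQ hσ
  have hcorner := hS.compatible.star_sup_mem hS.mono h hji₀ htj hs hτ hgood
  rcases h.distinguishes_of_isOrientation hτ htPQ'd with ⟨hτP', hτQ'⟩ | ⟨hτP', hτQ'⟩
  · obtain ⟨σ, hσ, hd⟩ := exists_isOrientation_effDistSeq_star_sup hS hprof hrobust hP hQ hs
      hseff hτP hτQ hgood hQ' hP' (isLeast_distinguishedBy_comm.1 hj) hτQ' hτP' hcorner
    exact ⟨_, ⟨t, ht, τ, hτP, hτ, σ, hσ, rfl⟩, hd.symm⟩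
  · obtain ⟨σ, hσ, hd⟩ := exists_isOrientation_effDistSeq_star_sup hS hprof hrobust hP hQ hs
      hseff hτP hτQ hgood hP' hQ' hj hτP' hτQ' hcorner
    exact ⟨_, ⟨t, ht, τ, hτP, hτ, σ, hσ, rfl⟩, hd⟩

theorem exists_isNestedSet_effDistinguishedBy_of_notMem [Finite U]
    (hS : IsCompatibleSeq star S) (hprof : ∀ P ∈ Ps, ∃ i, IsProfile star (S i) P)
    (hrobust : RobustSeq star S Ps) (hN : IsNestedSet star N) (hP : P ∈ Ps) (hQ : Q ∈ Ps)
    (hi₀ : IsLeast {i | DistinguishedBy star (S i) P Q} i₀)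
    (hNPQ : ¬ EffDistinguishedBy star S N P Q) :
    ∃ N', IsNestedSet star N' ∧ EffDistinguishedBy star S N' P Q ∧
      ∀ P' ∈ Ps, ∀ Q' ∈ Ps, DistinguishedBy star (S i₀) P' Q' →
        EffDistinguishedBy star S N P' Q' → EffDistinguishedBy star S N' P' Q' := by
  obtain ⟨s, ⟨hs, hsPQ⟩, hmin⟩ := Set.exists_min_image
    {u | u ∈ S i₀ ∧ Distinguishes star u P Q} (fun u => (crossing star N u).ncard)
    (Set.toFinite _) (let ⟨u, hu, hd⟩ := hi₀.1; ⟨u, hu, hd⟩)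
  obtain ⟨a, hPa⟩ := hprof P hP
  refine ⟨uncross star N P s, isNestedSet_uncross hS.involution hN hPa s,
    ⟨s, Or.inr (Set.mem_insert s _), (effDistSeq_iff_of_isLeast hS.mono hi₀).2 ⟨hsPQ, hs⟩⟩,
    fun P' hP' Q' hQ' hPQ' ⟨t, htN, htPQ'⟩ => ?_⟩
  by_cases ht : t ∈ crossing star N s
  · obtain ⟨j, hji₀, hj⟩ := exists_isLeast_distinguishedBy hPQ'
    obtain ⟨d, hd, hdPQ'⟩ := exists_mem_crossingCorners_effDistSeq hS hprof hrobust hN hP hQ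
      hi₀ hNPQ hs hsPQ (fun u hu hd => hmin u ⟨hu, hd⟩) hP' hQ' hj hji₀ ht htPQ'
    exact ⟨d, Or.inr (Set.mem_insert_of_mem s hd), hdPQ'⟩
  · exact ⟨t, Or.inl ⟨htN, ht⟩, htPQ'⟩

theorem exists_isNestedSet_effDistinguishedBy_of_forall_lt [Finite U]
    (hS : IsCompatibleSeq star S) (hprof : ∀ P ∈ Ps, ∃ i, IsProfile star (S i) P)
    (hrobust : RobustSeq star S Ps)
    (h₀ : ∃ N, IsNestedSet star N ∧ ∀ j < i₀, ∀ P ∈ Ps, ∀ Q ∈ Ps,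
      DistinguishedBy star (S j) P Q → EffDistinguishedBy star S N P Q) :
    ∃ N, IsNestedSet star N ∧ ∀ P ∈ Ps, ∀ Q ∈ Ps,
      DistinguishedBy star (S i₀) P Q → EffDistinguishedBy star S N P Q := by
  let missing : Set U → Set (Set U × Set U) := fun N =>
    {pq | pq.1 ∈ Ps ∧ pq.2 ∈ Ps ∧ DistinguishedBy star (S i₀) pq.1 pq.2 ∧
      ¬ EffDistinguishedBy star S N pq.1 pq.2}
  obtain ⟨N, ⟨hN, hlt⟩, hmin⟩ := Set.exists_min_image _ (fun N => (missing N).ncard)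
    (Set.toFinite _) h₀
  refine ⟨N, hN, fun P hP Q hQ hPQ => by_contra fun hNPQ => ?_⟩
  have hi₀ : IsLeast {i | DistinguishedBy star (S i) P Q} i₀ :=
    ⟨hPQ, fun j hj => not_lt.1 fun hji₀ => hNPQ (hlt j hji₀ P hP Q hQ hj)⟩
  obtain ⟨N', hN', hN'PQ, hcov⟩ :=
    exists_isNestedSet_effDistinguishedBy_of_notMem hS hprof hrobust hN hP hQ hi₀ hNPQ
  have hsub : missing N' ⊆ missing N \ {(P, Q)} := by
    rintro ⟨P', Q'⟩ ⟨hP', hQ', hPQ', hN'PQ'⟩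
    refine ⟨⟨hP', hQ', hPQ', fun h => hN'PQ' (hcov P' hP' Q' hQ' hPQ' h)⟩, ?_⟩
    rintro ⟨⟩
    exact hN'PQ' hN'PQ
  have hle := hmin N' ⟨hN', fun j hj P' hP' Q' hQ' hPQ' =>
    hcov P' hP' Q' hQ' (hPQ'.mono (hS.mono hj.le)) (hlt j hj P' hP' Q' hQ' hPQ')⟩
  exact ((Set.ncard_le_ncard hsub).trans_lt
    (Set.ncard_sdiff_singleton_lt_of_mem ⟨hP, hQ, hPQ, hNPQ⟩)).not_ge hle

theorem exists_isNestedSet_effDistinguishedBy [Finite U] (hS : IsCompatibleSeq star S)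
    (hprof : ∀ P ∈ Ps, ∃ i, IsProfile star (S i) P) (hrobust : RobustSeq star S Ps)
    (i : Fin (n + 1)) :
    ∃ N, IsNestedSet star N ∧ ∀ P ∈ Ps, ∀ Q ∈ Ps,
      DistinguishedBy star (S i) P Q → EffDistinguishedBy star S N P Q := by
  induction i using Fin.induction with
  | zero =>
    exact exists_isNestedSet_effDistinguishedBy_of_forall_lt hS hprof hrobust
      ⟨∅, fun a ha => ha.elim, fun j hj => absurd hj (Fin.not_lt_zero j)⟩
  | succ i ih =>
    obtain ⟨N, hN, hcov⟩ := ih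
    exact exists_isNestedSet_effDistinguishedBy_of_forall_lt hS hprof hrobust
      ⟨N, hN, fun j hj P hP Q hQ hPQ =>
        hcov P hP Q hQ (hPQ.mono (hS.mono (Fin.le_castSucc_iff.2 hj)))⟩

end Sequence

end

theorem tree_of_tangles_compatible_sequence_general [Lattice U] [Fintype U]
    (star : U → U) (hstar : OrderReversingInvolution star)
    {n : ℕ} (S : Fin (n + 1) → Set U)
    (hmono : ∀ i j : Fin (n + 1), i ≤ j → S i ⊆ S j)
    (hclosed : ∀ i, ∀ s ∈ S i, star s ∈ S i)
    (hcomp : Compatible star S)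
    (Ps : Set (Set U)) (hprof : ∀ P ∈ Ps, ∃ i, IsProfile star (S i) P)
    (hrobust : RobustSeq star S Ps) :
    ∃ N : Set U, (∀ a ∈ N, ∀ b ∈ N, Nested star a b) ∧
      ∀ P ∈ Ps, ∀ P' ∈ Ps, (∃ s ∈ S (Fin.last n), Distinguishes star s P P') →
        ∃ t ∈ N, EffDistSeq star S t P P' :=
  exists_isNestedSet_effDistinguishedBy ⟨hstar, fun i j => hmono i j, hclosed, hcomp⟩ hprof
    hrobust (Fin.last n)

/-- **Tree-of-tangles theorem for compatible sequences of structurally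
submodular separation systems.** -/
theorem tree_of_tangles_compatible_sequence [Lattice U] [Fintype U]
    (star : U → U) (hstar : OrderReversingInvolution star)
    {n : ℕ} (S : Fin (n + 1) → Set U)
    (hmono : ∀ i j : Fin (n + 1), i ≤ j → S i ⊆ S j)
    (hclosed : ∀ i, ∀ s ∈ S i, star s ∈ S i)
    (hsub : ∀ i, StructSubmodular (S i))
    (hcomp : Compatible star S)
    (Ps : Set (Set U)) (hprof : ∀ P ∈ Ps, ∃ i, IsProfile star (S i) P)
    (hrobust : RobustSeq star S Ps) :
    ∃ N : Set U, (∀ a ∈ N, ∀ b ∈ N, Nested star a b) ∧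
      ∀ P ∈ Ps, ∀ P' ∈ Ps, (∃ s ∈ S (Fin.last n), Distinguishes star s P P') →
        ∃ t ∈ N, EffDistSeq star S t P P' :=
  tree_of_tangles_compatible_sequence_general star hstar S hmono hclosed hcomp Ps hprof hrobust
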